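/- Let (H, ⟨·,·⟩) be a Hilbert space and ξ_0 ∈ H. Let ξ̂_1, …, ξ̂_R be independent H-valued random elements, and let α, q, ν be constants with 0 < q < α < 1/2 and 0 ≤ ν < (α − q)/(1 − q). Suppose there exists ε > 0 such that for every j with 1 ≤ j ≤ ⌊(1−ν)·R⌋ + 1, P(‖ξ̂_j − ξ_0‖ > ε) ≤ q. Then any geometric median ξ̂_* of {ξ̂_1, …, ξ̂_R} satisfies P(‖ξ̂_* − ξ_0‖ > C_α·ε) ≤ ( exp((1−ν)·ψ((α−ν)/(1−ν), q)) )^{−R}, where C_α = (1−α)·sqrt(1/(1−2α)) and ψ(α,q) = (1−α)·log((1−α)/(1−q)) + α·log(α/q). -/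

import Mathlib

open MeasureTheory ProbabilityTheory Finset
open scoped RealInnerProductSpace
set_option maxHeartbeats 1000000

/-- `ψ(α, q) = (1 − α)·log((1 − α)/(1 − q)) + α·log(α/q)`. -/
noncomputable def psiFn (α q : ℝ) : ℝ :=
  (1 - α) * Real.log ((1 - α) / (1 - q)) + α * Real.log (α / q)

/-- `C_α = (1 − α)·sqrt(1/(1 − 2α))`. -/
noncomputable def Calpha (α : ℝ) : ℝ := (1 - α) * Real.sqrt (1 / (1 - 2 * α))

/-- `y` is a geometric median of the points `x 1, …, x R` in a normed space:
a minimizer over the whole space of `∑ⱼ ‖y − xⱼ‖`. -/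
def IsGeometricMedian {H : Type*} [NormedAddCommGroup H] {R : ℕ}
    (x : Fin R → H) (y : H) : Prop :=
  ∀ z : H, ∑ j, ‖y - x j‖ ≤ ∑ j, ‖z - x j‖

lemma one_lt_Calpha {α : ℝ} (hα0 : 0 < α) (hα : α < 1/2) : 1 < Calpha α := by
  have h2 : 0 < 1 - 2*α := by linarith
  have h1 : 0 < 1 - α := by linarith
  have hs : Real.sqrt (1/(1-2*α)) ^ 2 * (1-2*α) = 1 := by
    rw [Real.sq_sqrt (le_of_lt (show (0:ℝ) < 1/(1-2*α) by positivity))]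
    field_simp
  have hsn : 0 ≤ Real.sqrt (1/(1-2*α)) := Real.sqrt_nonneg _
  have hs2pos : 0 < Real.sqrt (1/(1-2*α)) ^ 2 := by
    rcases eq_or_lt_of_le hsn with h | h
    · exfalso; rw [← h] at hs; simp at hs
    · positivity
  unfold Calpha
  nlinarith [mul_nonneg h1.le hsn, mul_pos (mul_pos hα0 hα0) hs2pos]

lemma minsker_geom {H : Type*} [NormedAddCommGroup H] [InnerProductSpace ℝ H]
    {R : ℕ} (x : Fin R → H) (y z : H) {α ε : ℝ}
    [DecidablePred fun j => ε < ‖x j - z‖]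
    (hα0 : 0 < α) (hα : α < 1/2) (hε : 0 < ε) (hR : 0 < R)
    (hmed : IsGeometricMedian x y) (hbig : Calpha α * ε < ‖y - z‖) :
    α * R < ((Finset.univ.filter fun j => ε < ‖x j - z‖).card : ℝ) := by
  have h2α : 0 < 1 - 2*α := by linarith
  have h1α : 0 < 1 - α := by linarith
  set r : ℝ := ‖z - y‖ with hr_def
  have hr : Calpha α * ε < r := by rwa [norm_sub_rev] at hbig
  have hC1 : 1 < Calpha α := one_lt_Calpha hα0 hα
  have hrε : ε < r := lt_of_lt_of_le (by nlinarith) hr.le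
  have hr0 : 0 < r := hε.trans hrε
  set u : H := r⁻¹ • (z - y) with hu_def
  have hu : ‖u‖ = 1 := by
    rw [hu_def, norm_smul, Real.norm_eq_abs, abs_of_pos (by positivity), ← hr_def]
    field_simp
  set σ : ℝ := Real.sqrt (r^2 - ε^2) with hσ_def
  have hσ2 : σ^2 = r^2 - ε^2 := Real.sq_sqrt (by nlinarith)
  have hσ0 : 0 ≤ σ := Real.sqrt_nonneg _
  set s : ℝ := σ / r with hs_def
  clear_value u r σ s
  have hs0 : 0 ≤ s := by rw [hs_def]; positivity
  have hCε : 0 < Calpha α * ε := mul_pos (lt_trans one_pos hC1) hε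
  have hr2 : (Calpha α * ε)^2 < r^2 := by nlinarith [hr, hCε]
  have hC2' : (Calpha α)^2 * (1-2*α) = (1-α)^2 := by
    unfold Calpha
    rw [mul_pow, Real.sq_sqrt (le_of_lt (show (0:ℝ) < 1/(1-2*α) by positivity))]
    field_simp
    exact div_self (by linarith : (0:ℝ) < 1 - α*2).ne'
  have hr2' : (1-α)^2 * ε^2 < r^2 * (1-2*α) := by nlinarith [hr2, hC2', h2α, sq_nonneg ε]
  have hs_lb : α < (1 - α) * s := by
    rw [hs_def, ← mul_div_assoc, lt_div_iff₀ hr0]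
    nlinarith [hr2', hσ2, mul_nonneg h1α.le hσ0, mul_pos hα0 hr0,
      sq_nonneg ((1-α)*σ - α*r), sq_nonneg ((1-α)*σ + α*r)]
  -- per-point bound for close points
  have hclose : ∀ j : Fin R, ‖x j - z‖ ≤ ε → ∀ t : ℝ, 0 ≤ t →
      ‖(y + t • u) - x j‖ ≤ ‖y - x j‖ - t * s + t^2 / (2*(r - ε)) := by
    intro j hj t ht
    set a : H := x j - y with ha_def
    clear_value a
    have ha_lb : r - ε ≤ ‖a‖ := by
      have h1 : ‖z - y‖ ≤ ‖z - x j‖ + ‖x j - y‖ := norm_sub_le_norm_sub_add_norm_sub z (x j) y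
      have h2 : ‖z - x j‖ = ‖x j - z‖ := norm_sub_rev _ _
      rw [← hr_def, ← ha_def, h2] at h1
      linarith
    have ha0 : 0 < ‖a‖ := lt_of_lt_of_le (by linarith) ha_lb
    set c : ℝ := ⟪a, z - y⟫ with hc_def
    clear_value c
    have hw : ‖x j - z‖^2 = ‖a‖^2 - 2*c + r^2 := by
      have h3 : x j - z = a - (z - y) := by rw [ha_def]; abel
      rw [h3, norm_sub_sq_real, ← hc_def, ← hr_def]
    have hsq : ‖x j - z‖^2 ≤ ε^2 := pow_le_pow_left₀ (norm_nonneg _) hj 2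
    have hcσ : σ * ‖a‖ ≤ c := by
      nlinarith [sq_nonneg (‖a‖ - σ), hσ2, hw, hsq]
    have hdisp : (y + t • u) - x j = -(a - t • u) := by rw [ha_def]; abel
    have hinner : ⟪a, t • u⟫ = t * (r⁻¹ * c) := by
      rw [real_inner_smul_right, hu_def, real_inner_smul_right, ← hc_def]
    have hexp : ‖a - t • u‖^2 = ‖a‖^2 - 2*(t*(r⁻¹*c)) + t^2 := by
      rw [norm_sub_sq_real, hinner, norm_smul, Real.norm_eq_abs, abs_of_nonneg ht, hu,
        mul_one]
    have key : ‖a - t • u‖ ≤ (2*‖a‖^2 - 2*(t*(r⁻¹*c)) + t^2) / (2*‖a‖) := by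
      rw [le_div_iff₀ (by positivity)]
      nlinarith [sq_nonneg (‖a - t • u‖ - ‖a‖), hexp]
    have e1 : (2*‖a‖^2 - 2*(t*(r⁻¹*c)) + t^2) / (2*‖a‖)
        = ‖a‖ - t * (c/(r*‖a‖)) + t^2/(2*‖a‖) := by
      field_simp
    have e2 : t * s ≤ t * (c/(r*‖a‖)) := by
      apply mul_le_mul_of_nonneg_left _ ht
      rw [hs_def, div_le_div_iff₀ hr0 (by positivity)]
      nlinarith [hcσ, hr0]
    have e3 : t^2/(2*‖a‖) ≤ t^2/(2*(r-ε)) := by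
      gcongr
    have hnorm_eq : ‖(y + t • u) - x j‖ = ‖a - t • u‖ := by rw [hdisp, norm_neg]
    have hnorm_y : ‖y - x j‖ = ‖a‖ := by rw [ha_def, norm_sub_rev]
    rw [hnorm_eq, hnorm_y]
    calc ‖a - t • u‖ ≤ ‖a‖ - t * (c/(r*‖a‖)) + t^2/(2*‖a‖) := by rw [← e1]; exact key
      _ ≤ ‖a‖ - t * s + t^2/(2*(r-ε)) := by linarith
  -- per-point bound for all points
  have hany : ∀ j : Fin R, ∀ t : ℝ, 0 ≤ t →
      ‖(y + t • u) - x j‖ ≤ ‖y - x j‖ + t := by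
    intro j t ht
    have h4 : (y + t • u) - x j = (y - x j) + t • u := by abel
    rw [h4]
    calc ‖(y - x j) + t • u‖ ≤ ‖y - x j‖ + ‖t • u‖ := norm_add_le _ _
      _ = ‖y - x j‖ + t := by rw [norm_smul, Real.norm_eq_abs, abs_of_nonneg ht, hu, mul_one]
  -- contradiction setup
  by_contra hcon
  push_neg at hcon
  set far : Finset (Fin R) := Finset.univ.filter (fun j => ε < ‖x j - z‖) with hfar_def
  set cl : Finset (Fin R) := Finset.univ.filter (fun j => ¬ ε < ‖x j - z‖) with hcl_def
  have hcards : far.card + cl.card = R := by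
    rw [hfar_def, hcl_def, Finset.card_filter_add_card_filter_not, Finset.card_univ,
      Fintype.card_fin]
  set m : ℝ := (far.card : ℝ) with hm_def
  set m' : ℝ := (cl.card : ℝ) with hm'_def
  have hmm' : m + m' = (R:ℝ) := by rw [hm_def, hm'_def]; exact_mod_cast hcards
  have hRpos : (0:ℝ) < R := by exact_mod_cast hR
  have hR1 : (1:ℝ) ≤ (R:ℝ) := by exact_mod_cast hR
  have hm'_lb : (1-α) * R ≤ m' := by nlinarith [hcon, hmm']
  have hm'_pos : 0 < m' := by nlinarith
  have hD : 0 < m' * s - m := by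
    nlinarith [mul_nonneg (sub_nonneg.mpr hm'_lb) hs0, mul_pos hRpos (sub_pos.mpr hs_lb)]
  set t : ℝ := (r - ε) * (m'*s - m) / m' with ht_def
  have ht0 : 0 < t := by
    rw [ht_def]
    have : 0 < r - ε := by linarith
    positivity
  clear_value t
  have hsum_far : ∑ j ∈ far, ‖(y + t • u) - x j‖ ≤ (∑ j ∈ far, ‖y - x j‖) + m * t := by
    calc ∑ j ∈ far, ‖(y + t • u) - x j‖ ≤ ∑ j ∈ far, (‖y - x j‖ + t) :=
          Finset.sum_le_sum fun j _ => hany j t ht0.le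
      _ = (∑ j ∈ far, ‖y - x j‖) + m * t := by
          rw [Finset.sum_add_distrib, Finset.sum_const, nsmul_eq_mul, hm_def]
  have hsum_cl : ∑ j ∈ cl, ‖(y + t • u) - x j‖ ≤
      (∑ j ∈ cl, ‖y - x j‖) + m' * (-(t*s) + t^2/(2*(r-ε))) := by
    calc ∑ j ∈ cl, ‖(y + t • u) - x j‖
        ≤ ∑ j ∈ cl, (‖y - x j‖ + (-(t*s) + t^2/(2*(r-ε)))) := by
          apply Finset.sum_le_sum
          intro j hj
          rw [hcl_def] at hj
          have hjc : ¬ ε < ‖x j - z‖ := (Finset.mem_filter.mp hj).2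
          have := hclose j (not_lt.mp hjc) t ht0.le
          linarith
      _ = (∑ j ∈ cl, ‖y - x j‖) + m' * (-(t*s) + t^2/(2*(r-ε))) := by
          rw [Finset.sum_add_distrib, Finset.sum_const, nsmul_eq_mul, hm'_def]
  have hsplit : ∀ v : H, ∑ j, ‖v - x j‖ = (∑ j ∈ far, ‖v - x j‖) + ∑ j ∈ cl, ‖v - x j‖ := by
    intro v
    rw [hfar_def, hcl_def]
    exact (Finset.sum_filter_add_sum_filter_not Finset.univ _ _).symm
  have hmin := hmed (y + t • u)
  rw [hsplit y, hsplit (y + t • u)] at hmin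
  have hfinal : 0 ≤ m * t + m' * (-(t*s) + t^2/(2*(r-ε))) := by linarith
  have hre : (0:ℝ) < r - ε := by linarith
  have hval : m * t + m' * (-(t*s) + t^2/(2*(r-ε))) = -((r-ε)*(m'*s - m)^2/(2*m')) := by
    rw [ht_def]
    field_simp [hm'_pos.ne', hre.ne']
    ring
  rw [hval] at hfinal
  have : 0 < (r-ε)*(m'*s - m)^2/(2*m') := by positivity
  linarith

/-- geometric median concentration, adopted from Minsker (2015):
Let `H` be a Hilbert space and `ξ₀ ∈ H`.  Let `ξ̂₁, …, ξ̂_R` be independent `H`-valued random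
elements, and let `α, q, ν` be constants with `0 < q < α < 1/2` and `0 ≤ ν < (α − q)/(1 − q)`.
Suppose there exists `ε > 0` such that for every `j` with `1 ≤ j ≤ ⌊(1 − ν)·R⌋ + 1`,
`P(‖ξ̂ⱼ − ξ₀‖ > ε) ≤ q`.  Then any geometric median `ξ̂⋆` of `{ξ̂₁, …, ξ̂_R}` satisfies
`P(‖ξ̂⋆ − ξ₀‖ > C_α·ε) ≤ (exp((1 − ν)·ψ((α − ν)/(1 − ν), q)))^{−R}`. -/
theorem geometric_median_concentration
    {H : Type*} [NormedAddCommGroup H] [InnerProductSpace ℝ H] [CompleteSpace H]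
    [MeasurableSpace H] [BorelSpace H]
    {Ω : Type*} [MeasurableSpace Ω] (P : Measure Ω) [IsProbabilityMeasure P]
    (R : ℕ) (ξ : Fin R → Ω → H) (ξ0 : H)
    (hindep : iIndepFun ξ P)
    (hmeas : ∀ j, Measurable (ξ j))
    (α q ν : ℝ) (hq : 0 < q) (hqα : q < α) (hα : α < 1 / 2)
    (hν0 : 0 ≤ ν) (hν : ν < (α - q) / (1 - q))
    (ε : ℝ) (hε : 0 < ε)
    (hconc : ∀ j : Fin R, (j : ℕ) + 1 ≤ Nat.floor ((1 - ν) * (R : ℝ)) + 1 →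
      P {ω | ε < ‖ξ j ω - ξ0‖} ≤ ENNReal.ofReal q)
    (ξstar : Ω → H) (hξstar : ∀ ω, IsGeometricMedian (fun j => ξ j ω) (ξstar ω)) :
    P {ω | Calpha α * ε < ‖ξstar ω - ξ0‖} ≤
      ENNReal.ofReal (Real.exp ((1 - ν) * psiFn ((α - ν) / (1 - ν)) q)) ^ (-(R : ℤ)) := by
  classical
  rcases Nat.eq_zero_or_pos R with hR0 | hRpos
  · subst hR0
    simp only [Nat.cast_zero, neg_zero, zpow_zero]
    exact prob_le_one
  -- basic numeric facts
  have hq1 : q < 1 := by linarith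
  have hν1 : ν < 1 := by
    have : (α - q) / (1 - q) < 1 := by
      rw [div_lt_one (by linarith)]
      linarith
    linarith
  have h1ν : 0 < 1 - ν := by linarith
  set α' : ℝ := (α - ν) / (1 - ν) with hα'_def
  have key : α' * (1 - ν) = α - ν := by
    rw [hα'_def]; field_simp
  have hα'q : q < α' := by
    rw [hα'_def, lt_div_iff₀ h1ν]
    rw [lt_div_iff₀ (by linarith : (0:ℝ) < 1 - q)] at hν
    nlinarith
  have hα'0 : 0 < α' := hq.trans hα'q
  have hα'1 : α' < 1 := by
    rw [hα'_def, div_lt_one h1ν]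
    linarith
  have key2 : (1 - ν) * (1 - α') = 1 - α := by nlinarith [key]
  clear_value α'
  set L : ℝ := Real.log ((1 - q) / (1 - α')) with hL_def
  set M : ℝ := Real.log (α' / q) with hM_def
  set lam : ℝ := L + M with hlam_def
  have hM0 : 0 < M := by
    rw [hM_def]
    apply Real.log_pos
    rw [lt_div_iff₀ hq]
    linarith
  have hL0 : 0 ≤ L := by
    rw [hL_def]
    apply Real.log_nonneg
    rw [le_div_iff₀ (by linarith : (0:ℝ) < 1 - α')]
    linarith
  have hlam0 : 0 ≤ lam := by rw [hlam_def]; linarith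
  have heL : Real.exp L = (1 - q) / (1 - α') := by
    rw [hL_def, Real.exp_log (div_pos (by linarith) (by linarith))]
  have helam : Real.exp lam = (1 - q) / (1 - α') * (α' / q) := by
    rw [hlam_def, Real.exp_add, heL, hM_def, Real.exp_log (div_pos hα'0 hq)]
  have hmix : 1 - q + q * Real.exp lam = Real.exp L := by
    have h1α' : (0:ℝ) < 1 - α' := by linarith
    rw [helam, heL]
    field_simp
    ring
  -- the indicator random variables
  set g : H → ℝ := Set.indicator {v : H | ε < ‖v - ξ0‖} (fun _ => 1) with hg_def
  have hgmeas : Measurable g := by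
    apply measurable_const.indicator
    exact (isOpen_lt continuous_const ((continuous_id.sub continuous_const).norm)).measurableSet
  set X : Fin R → Ω → ℝ := fun j => g ∘ ξ j with hX_def
  have hXmeas : ∀ j, Measurable (X j) := fun j => hgmeas.comp (hmeas j)
  have hXindep : iIndepFun X P :=
    hindep.comp (fun _ => g) (fun _ => hgmeas)
  have hX01 : ∀ j ω, X j ω = 0 ∨ X j ω = 1 := by
    intro j ω
    rw [hX_def]
    simp only [Function.comp_apply, hg_def, Set.indicator_apply]
    split <;> simp
  have hXite : ∀ j ω, X j ω = if ε < ‖ξ j ω - ξ0‖ then (1:ℝ) else 0 := by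
    intro j ω
    rw [hX_def]
    simp only [Function.comp_apply, hg_def, Set.indicator_apply, Set.mem_setOf_eq]
  -- the good index set
  set K : ℕ := Nat.floor ((1 - ν) * (R : ℝ)) with hK_def
  set G : Finset (Fin R) := Finset.univ.filter (fun j => (j : ℕ) ≤ K) with hG_def
  set n0 : ℕ := G.card with hn0_def
  have hn0R : n0 ≤ R := by
    rw [hn0_def, hG_def]
    calc (Finset.univ.filter (fun j : Fin R => (j : ℕ) ≤ K)).card
        ≤ (Finset.univ : Finset (Fin R)).card := Finset.card_filter_le _ _
      _ = R := by rw [Finset.card_univ, Fintype.card_fin]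
  have hcardG : n0 = min (K + 1) R := by
    rw [hn0_def, hG_def]
    have h1 : (Finset.univ.filter (fun j : Fin R => (j : ℕ) ≤ K)).card
        = ((Finset.range R).filter (fun i => i ≤ K)).card := by
      rw [Finset.card_filter, Finset.card_filter]
      exact Fin.sum_univ_eq_sum_range (fun i => if i ≤ K then 1 else 0) R
    rw [h1]
    have h2 : (Finset.range R).filter (fun i => i ≤ K) = Finset.range (min (K + 1) R) := by
      ext i
      simp [Nat.lt_min, Nat.lt_succ_iff, and_comm]
    rw [h2, Finset.card_range]
  have hn0lb : (1 - ν) * R ≤ (n0 : ℝ) := by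
    rw [hcardG]
    rcases le_total (K + 1) R with h | h
    · rw [min_eq_left h]
      have := Nat.lt_floor_add_one ((1 - ν) * (R : ℝ))
      rw [← hK_def] at this
      push_cast
      exact_mod_cast this.le
    · rw [min_eq_right h]
      have hRr : (0:ℝ) ≤ (R:ℝ) := Nat.cast_nonneg R
      nlinarith
  -- the count S and threshold a
  set S : Ω → ℝ := fun ω => ∑ j ∈ G, X j ω with hS_def
  set a : ℝ := (α - 1) * R + n0 with ha_def
  -- event inclusion
  have hsub : {ω | Calpha α * ε < ‖ξstar ω - ξ0‖} ⊆ {ω | a ≤ S ω} := by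
    intro ω hω
    simp only [Set.mem_setOf_eq] at hω ⊢
    have hcount := minsker_geom (fun j => ξ j ω) (ξstar ω) ξ0
      (hq.trans hqα) hα hε hRpos (hξstar ω) hω
    have hScard : S ω = ((G.filter (fun j => ε < ‖ξ j ω - ξ0‖)).card : ℝ) := by
      rw [hS_def]
      simp only
      rw [show (∑ j ∈ G, X j ω) = ∑ j ∈ G, (if ε < ‖ξ j ω - ξ0‖ then (1:ℝ) else 0) from
        Finset.sum_congr rfl (fun j _ => hXite j ω)]
      rw [Finset.sum_boole]
    have hcard_le : ((Finset.univ.filter (fun j => ε < ‖ξ j ω - ξ0‖)).card : ℝ)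
        ≤ ((G.filter (fun j => ε < ‖ξ j ω - ξ0‖)).card : ℝ) + (R - n0 : ℕ) := by
      have hsubset : Finset.univ.filter (fun j => ε < ‖ξ j ω - ξ0‖)
          ⊆ (G.filter (fun j => ε < ‖ξ j ω - ξ0‖)) ∪ Gᶜ := by
        intro j hj
        by_cases h : j ∈ G
        · exact Finset.mem_union_left _ (Finset.mem_filter.mpr ⟨h, (Finset.mem_filter.mp hj).2⟩)
        · exact Finset.mem_union_right _ (Finset.mem_compl.mpr h)
      have := Finset.card_le_card hsubset
      have hcc : Gᶜ.card = R - n0 := by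
        rw [Finset.card_compl, Fintype.card_fin, hn0_def]
      calc ((Finset.univ.filter (fun j => ε < ‖ξ j ω - ξ0‖)).card : ℝ)
          ≤ (((G.filter (fun j => ε < ‖ξ j ω - ξ0‖)) ∪ Gᶜ).card : ℝ) := by exact_mod_cast this
        _ ≤ ((G.filter (fun j => ε < ‖ξ j ω - ξ0‖)).card : ℝ) + (Gᶜ.card : ℝ) := by
            exact_mod_cast Finset.card_union_le _ _
        _ = _ := by rw [hcc]
    have hn0cast : ((R - n0 : ℕ) : ℝ) = (R : ℝ) - n0 := by
      rw [Nat.cast_sub hn0R]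
    rw [hScard, ha_def]
    rw [hn0cast] at hcard_le
    linarith
  -- integrability
  have hXint : ∀ j, Integrable (X j) P := by
    intro j
    apply Integrable.mono' (integrable_const (1:ℝ)) (hXmeas j).aestronglyMeasurable
    filter_upwards with ω
    rcases hX01 j ω with h | h <;> rw [h] <;> norm_num
  have hSbound : ∀ ω, 0 ≤ S ω ∧ S ω ≤ n0 := by
    intro ω
    constructor
    · apply Finset.sum_nonneg
      intro j _
      rcases hX01 j ω with h | h <;> rw [h] <;> norm_num
    · rw [hS_def, hn0_def]
      calc ∑ j ∈ G, X j ω ≤ ∑ j ∈ G, 1 := by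
            apply Finset.sum_le_sum
            intro j _
            rcases hX01 j ω with h | h <;> rw [h] <;> norm_num
        _ = (G.card : ℝ) := by rw [Finset.sum_const, nsmul_eq_mul, mul_one]
  have hSint : Integrable (fun ω => Real.exp (lam * S ω)) P := by
    apply Integrable.mono' (integrable_const (Real.exp (lam * n0)))
    · apply Measurable.aestronglyMeasurable
      apply Measurable.exp
      apply Measurable.const_mul
      exact Finset.measurable_sum G (fun j _ => hXmeas j)
    · filter_upwards with ω
      rw [Real.norm_eq_abs, abs_of_pos (Real.exp_pos _), Real.exp_le_exp]
      exact mul_le_mul_of_nonneg_left (hSbound ω).2 hlam0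
  -- Chernoff bound
  have hch : (P {ω | a ≤ S ω}).toReal ≤ Real.exp (-lam * a) * mgf S P lam :=
    measure_ge_le_exp_mul_mgf a hlam0 hSint
  -- mgf of the sum
  have hmgf_sum : mgf S P lam = ∏ j ∈ G, mgf (X j) P lam := by
    have : S = ∑ j ∈ G, X j := by
      funext ω
      rw [hS_def, Finset.sum_apply]
    rw [this]
    exact hXindep.mgf_sum hXmeas G
  -- mgf of each indicator
  have hmgf_le : ∀ j ∈ G, mgf (X j) P lam ≤ Real.exp L := by
    intro j hj
    have hjK : (j : ℕ) + 1 ≤ K + 1 := by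
      rw [hG_def] at hj
      have := (Finset.mem_filter.mp hj).2
      omega
    have hPj : (P {ω | ε < ‖ξ j ω - ξ0‖}).toReal ≤ q := by
      apply ENNReal.toReal_le_of_le_ofReal hq.le
      exact hconc j hjK
    have hmeasA : MeasurableSet {ω | ε < ‖ξ j ω - ξ0‖} := by
      have hrfl : {ω | ε < ‖ξ j ω - ξ0‖} = ξ j ⁻¹' {v : H | ε < ‖v - ξ0‖} := rfl
      rw [hrfl]
      exact (hmeas j)
        (isOpen_lt continuous_const ((continuous_id.sub continuous_const).norm)).measurableSet
    have hexpX : (fun ω => Real.exp (lam * X j ω))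
        = fun ω => 1 + (Real.exp lam - 1) * X j ω := by
      funext ω
      rcases hX01 j ω with h | h <;> rw [h] <;> simp
    have hintX : ∫ ω, X j ω ∂P = (P {ω | ε < ‖ξ j ω - ξ0‖}).toReal := by
      have hXind : X j = Set.indicator {ω | ε < ‖ξ j ω - ξ0‖} (fun _ => (1:ℝ)) := by
        funext ω
        rw [hXite j ω, Set.indicator_apply]
        simp only [Set.mem_setOf_eq]
      rw [hXind, MeasureTheory.integral_indicator_const _ hmeasA]
      simp
      rfl
    have hmgf_eq : mgf (X j) P lam = 1 + (Real.exp lam - 1) * (P {ω | ε < ‖ξ j ω - ξ0‖}).toReal := by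
      rw [mgf, hexpX]
      rw [integral_add (integrable_const 1) ((hXint j).const_mul _)]
      rw [integral_const_mul, hintX]
      simp
    rw [hmgf_eq]
    have helam1 : 1 ≤ Real.exp lam := Real.one_le_exp hlam0
    have := (ENNReal.toReal_nonneg : 0 ≤ (P {ω | ε < ‖ξ j ω - ξ0‖}).toReal)
    nlinarith [hmix, hPj]
  -- product bound
  have hprod : ∏ j ∈ G, mgf (X j) P lam ≤ (Real.exp L) ^ n0 := by
    rw [hn0_def, ← Finset.prod_const]
    apply Finset.prod_le_prod
    · intro j _
      exact mgf_nonneg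
    · exact hmgf_le
  -- the exponent computation
  have hψ : psiFn α' q = α' * M - (1 - α') * L := by
    unfold psiFn
    rw [hM_def, hL_def]
    have : (1 - α') / (1 - q) = ((1 - q) / (1 - α'))⁻¹ := by
      rw [inv_div]
    rw [this, Real.log_inv]
    ring
  have hexp_ineq : Real.exp (-lam * a) * (Real.exp L) ^ n0
      ≤ Real.exp (-(R : ℝ) * ((1 - ν) * psiFn α' q)) := by
    rw [← Real.exp_nat_mul, ← Real.exp_add, Real.exp_le_exp]
    have hψ' : (1 - ν) * psiFn α' q = (α - ν) * M - (1 - α) * L := by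
      rw [hψ]
      linear_combination M * key - L * key2
    rw [hψ', ha_def, hlam_def]
    nlinarith [mul_nonneg hM0.le (sub_nonneg.mpr hn0lb)]
  -- chain the real bounds
  have hreal : (P {ω | a ≤ S ω}).toReal ≤ Real.exp (-(R : ℝ) * ((1 - ν) * psiFn α' q)) := by
    calc (P {ω | a ≤ S ω}).toReal ≤ Real.exp (-lam * a) * mgf S P lam := hch
      _ = Real.exp (-lam * a) * ∏ j ∈ G, mgf (X j) P lam := by rw [hmgf_sum]
      _ ≤ Real.exp (-lam * a) * (Real.exp L) ^ n0 := by
          apply mul_le_mul_of_nonneg_left hprod (Real.exp_nonneg _)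
      _ ≤ _ := hexp_ineq
  -- convert to ENNReal
  have hrhs : (ENNReal.ofReal (Real.exp ((1 - ν) * psiFn α' q))) ^ (-(R : ℤ))
      = ENNReal.ofReal (Real.exp (-(R : ℝ) * ((1 - ν) * psiFn α' q))) := by
    rw [ENNReal.zpow_neg,
      zpow_natCast, ← ENNReal.ofReal_pow (Real.exp_nonneg _),
      ← Real.exp_nat_mul, ← ENNReal.ofReal_inv_of_pos (Real.exp_pos _), ← Real.exp_neg]
    congr 1
    ring
  calc P {ω | Calpha α * ε < ‖ξstar ω - ξ0‖} ≤ P {ω | a ≤ S ω} := measure_mono hsub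
    _ = ENNReal.ofReal ((P {ω | a ≤ S ω}).toReal) := (ENNReal.ofReal_toReal (measure_ne_top P _)).symm
    _ ≤ ENNReal.ofReal (Real.exp (-(R : ℝ) * ((1 - ν) * psiFn α' q))) :=
        ENNReal.ofReal_le_ofReal hreal
    _ = _ := by rw [hα'_def] at hrhs ⊢; rw [hrhs]
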